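/- arXiv:1701.08152 — 4 statements merged into one kernel-verified Lean document; each statement's English description precedes it below -/
import Mathlib

section
/- Let R be a (not necessarily commutative) ring and n : ℕ. A function φ : (Fin n → R) → R preserves left R-affine combinations — i.e. for every j : ℕ, every a : Fin j → R with ∑ k, a k = 1, and every family x : Fin j → (Fin n → R) one has φ (fun i => ∑ k, a k * x k i) = ∑ k, a k * φ (x k) — if and only if there exist u₀ : R and u : Fin n → R with φ x = u₀ + ∑ i, x i * u i for all x; moreover such a pair (u₀, u) is unique. -/
/-!
An affine form `x ↦ u₀ + ∑ i, x i * u i` preserves left affine combinations because the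
coefficients act on the left while the `u i` act on the right. Conversely, every `x : R^n` is the
left affine combination of `0, e₀, …, e_{n-1}` with coefficients `1 - ∑ i, x i, x 0, …, x (n-1)`,
so a map preserving such combinations is the affine form with `u₀ = φ 0` and
`u i = φ eᵢ - φ 0`. Evaluating at `0` and at the `eᵢ` recovers `(u₀, u)`, whence uniqueness.
-/

open Finset

section

variable {R ι : Type*} [Ring R] [Fintype ι]

def PreservesLeftAffineCombinations (φ : (ι → R) → R) : Prop :=
  ∀ (j : ℕ) (a : Fin j → R), ∑ k, a k = 1 → ∀ x : Fin j → ι → R,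
    φ (fun i => ∑ k, a k * x k i) = ∑ k, a k * φ (x k)

theorem affineForm_sum_mul {κ : Type*} [Fintype κ] (u₀ : R) (u : ι → R) {a : κ → R}
    (ha : ∑ k, a k = 1) (x : κ → ι → R) :
    u₀ + ∑ i, (∑ k, a k * x k i) * u i = ∑ k, a k * (u₀ + ∑ i, x k i * u i) := by
  have hu₀ : ∑ k, a k * u₀ = u₀ := by rw [← sum_mul, ha, one_mul]
  simp only [mul_add, sum_add_distrib, hu₀, mul_sum, sum_mul, mul_assoc]
  rw [sum_comm]

theorem preservesLeftAffineCombinations_affineForm (u₀ : R) (u : ι → R) :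
    PreservesLeftAffineCombinations (fun x : ι → R => u₀ + ∑ i, x i * u i) :=
  fun _ _ ha x => affineForm_sum_mul u₀ u ha x

theorem affineForm_coeffs_unique [DecidableEq ι] {u₀ u₀' : R} {u u' : ι → R}
    (h : ∀ x : ι → R, u₀ + ∑ i, x i * u i = u₀' + ∑ i, x i * u' i) : u₀ = u₀' ∧ u = u' := by
  have h₀ : u₀ = u₀' := by simpa using h 0
  refine ⟨h₀, funext fun i => ?_⟩
  simpa [h₀, Pi.single_apply] using h (Pi.single i 1)

end

section

variable {R : Type*} [Ring R] {n : ℕ}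

theorem sum_cons_one_sub_sum (x : Fin n → R) :
    ∑ k, (Fin.cons (1 - ∑ i, x i) x : Fin (n + 1) → R) k = 1 := by
  simp [Fin.sum_univ_succ]

theorem sum_cons_mul_cons_zero_single (x : Fin n → R) :
    (fun i => ∑ k, (Fin.cons (1 - ∑ i, x i) x : Fin (n + 1) → R) k *
      (Fin.cons 0 (fun k => Pi.single k 1) : Fin (n + 1) → Fin n → R) k i) = x := by
  funext i
  simp [Fin.sum_univ_succ, Pi.single_apply]

theorem PreservesLeftAffineCombinations.eq_affineForm {φ : (Fin n → R) → R}
    (h : PreservesLeftAffineCombinations φ) (x : Fin n → R) :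
    φ x = φ 0 + ∑ i, x i * (φ (Pi.single i 1) - φ 0) := by
  have key := h (n + 1) _ (sum_cons_one_sub_sum x) (Fin.cons 0 fun k => Pi.single k 1)
  rw [sum_cons_mul_cons_zero_single] at key
  rw [key, Fin.sum_univ_succ]
  simp only [Fin.cons_zero, Fin.cons_succ, sub_mul, one_mul, mul_sub, sum_sub_distrib, sum_mul]
  abel

end

/-- For a ring `R`, a function `φ : R^n → R` preserves left `R`-affine combinations
iff it is of the form `x ↦ u₀ + ∑ i, x i * u i`; moreover such a representing pair
`(u₀, u)` is unique. -/
theorem stmt0 {R : Type*} [Ring R] (n : ℕ) (φ : (Fin n → R) → R) :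
    ((∀ (j : ℕ) (a : Fin j → R), (∑ k, a k) = 1 →
        ∀ x : Fin j → (Fin n → R),
          φ (fun i => ∑ k, a k * x k i) = ∑ k, a k * φ (x k)) ↔
      ∃ (u₀ : R) (u : Fin n → R), ∀ x, φ x = u₀ + ∑ i, x i * u i) ∧
    (∀ (u₀ : R) (u : Fin n → R) (u₀' : R) (u' : Fin n → R),
      (∀ x, φ x = u₀ + ∑ i, x i * u i) →
      (∀ x, φ x = u₀' + ∑ i, x i * u' i) →
      u₀ = u₀' ∧ u = u') := by
  refine ⟨⟨fun h => ⟨_, _, PreservesLeftAffineCombinations.eq_affineForm h⟩, ?_⟩, ?_⟩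
  · rintro ⟨u₀, u, hu⟩
    obtain rfl : φ = fun x => u₀ + ∑ i, x i * u i := funext hu
    exact preservesLeftAffineCombinations_affineForm u₀ u
  · intro u₀ u u₀' u' h h'
    exact affineForm_coeffs_unique fun x => (h x).symm.trans (h' x)
end

section
/- Let K be an Archimedean linearly ordered field, and let K₊ := {c : K // 0 ≤ c} be its nonnegative cone, a commutative semiring under the induced operations. For n : ℕ, a function φ : (Fin n → K₊) → K₊ preserves K₊-convex combinations — i.e. for every j : ℕ, every a : Fin j → K₊ with ∑ k, a k = 1, and every family x : Fin j → (Fin n → K₊) one has φ (fun i => ∑ k, a k * x k i) = ∑ k, a k * φ (x k) — if and only if there exist u₀ : K₊ and u : Fin n → K₊ with φ x = u₀ + ∑ i, u i * x i for all x; moreover such a pair (u₀, u) is unique. -/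
/-!
A map `φ` preserving binary convex combinations satisfies `φ (t • x) + t φ 0 = t φ x + φ 0`:
for `t ≤ 1` this is the combination of `x` and `0`, and for `t > 1` it follows from the case
`t⁻¹`. Taking `t = 1/2` gives `φ (x + y) + φ 0 = φ x + φ y`, so `x ↦ φ x - φ 0` is linear
as soon as it is defined. It is, because `φ 0 ≤ φ x`: otherwise `φ (m • x) = φ 0 - m (φ 0 - φ x)`
would become negative for large `m` by the Archimedean property.
-/

open Finset

def PreservesConvexPairs {R M : Type*} [Semiring R] [AddCommMonoid M] [Module R M]
    (φ : M → R) : Prop :=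
  ∀ a b : R, a + b = 1 → ∀ x y : M, φ (a • x + b • y) = a * φ x + b * φ y

namespace PreservesConvexPairs

theorem map_smul_of_le_one {R M : Type*} [CommSemiring R] [LE R] [ExistsAddOfLE R]
    [AddCommMonoid M] [Module R M] {φ : M → R} (h : PreservesConvexPairs φ) {t : R} (ht : t ≤ 1)
    (x : M) : φ (t • x) + t * φ 0 = t * φ x + φ 0 := by
  obtain ⟨s, hs⟩ := exists_add_of_le ht
  have := h t s hs.symm x 0
  rw [smul_zero, add_zero] at this
  calc φ (t • x) + t * φ 0 = t * φ x + (t + s) * φ 0 := by rw [this]; ring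
    _ = t * φ x + φ 0 := by rw [← hs, one_mul]

variable {R M : Type*} [Semifield R] [LinearOrder R] [IsStrictOrderedRing R]
  [AddCommMonoid M] [Module R M]

variable {φ : M → R}

theorem map_smul [ExistsAddOfLE R] (h : PreservesConvexPairs φ) (t : R) (x : M) :
    φ (t • x) + t * φ 0 = t * φ x + φ 0 := by
  rcases le_or_gt t 1 with ht | ht
  · exact h.map_smul_of_le_one ht x
  · have ht₀ : t ≠ 0 := (zero_lt_one.trans ht).ne'
    have key := h.map_smul_of_le_one (inv_le_one_of_one_le₀ ht.le) (t • x)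
    rw [inv_smul_smul₀ ht₀] at key
    calc φ (t • x) + t * φ 0 = t * (t⁻¹ * φ (t • x) + φ 0) := by field_simp
      _ = t * φ x + φ 0 := by rw [← key]; field_simp

theorem map_add [ExistsAddOfLE R] (h : PreservesConvexPairs φ) (x y : M) :
    φ (x + y) + φ 0 = φ x + φ y := by
  have half : (2⁻¹ : R) + 2⁻¹ = 1 := by rw [← two_mul, mul_inv_cancel₀ two_ne_zero]
  have hmid := h 2⁻¹ 2⁻¹ half x y
  have hscale := h.map_smul 2⁻¹ (x + y)
  rw [smul_add, hmid] at hscale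
  apply add_left_cancel (a := φ 0)
  calc φ 0 + (φ (x + y) + φ 0) = 2 * (2⁻¹ * φ (x + y) + φ 0) := by field_simp; ring
    _ = 2 * (2⁻¹ * φ x + 2⁻¹ * φ y + 2⁻¹ * φ 0) := by rw [hscale]
    _ = φ 0 + (φ x + φ y) := by field_simp; ring

variable [CanonicallyOrderedAdd R] [Archimedean R]

theorem apply_zero_le (h : PreservesConvexPairs φ) (x : M) : φ 0 ≤ φ x := by
  by_contra! hlt
  obtain ⟨d, hd, hφd⟩ := exists_pos_add_of_lt hlt
  obtain ⟨m, hm⟩ := Archimedean.arch (φ 0) hd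
  have hscale : φ ((m + 1 : R) • x) + (m + 1) * d = φ 0 := by
    apply add_left_cancel (a := (m + 1) * φ x)
    calc (m + 1) * φ x + (φ ((m + 1 : R) • x) + (m + 1) * d)
        = φ ((m + 1 : R) • x) + (m + 1) * φ 0 := by rw [← hφd]; ring
      _ = (m + 1) * φ x + φ 0 := h.map_smul _ x
  have : (m + 1) * d ≤ m * d := by
    calc (m + 1) * d ≤ φ ((m + 1 : R) • x) + (m + 1) * d := le_add_self
      _ = φ 0 := hscale
      _ ≤ m * d := by rwa [← nsmul_eq_mul]
  rw [add_one_mul] at this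
  exact (lt_add_of_pos_right _ hd).not_ge this

theorem exists_linearMap (h : PreservesConvexPairs φ) :
    ∃ ℓ : M →ₗ[R] R, ∀ x, φ x = φ 0 + ℓ x := by
  choose ℓ hℓ using fun x => exists_add_of_le (h.apply_zero_le x)
  refine ⟨{ toFun := ℓ, map_add' := fun x y => ?_, map_smul' := fun t x => ?_ }, hℓ⟩
  · apply add_left_cancel (a := φ 0 + φ 0)
    calc φ 0 + φ 0 + ℓ (x + y) = φ (x + y) + φ 0 := by rw [hℓ (x + y)]; ring
      _ = φ x + φ y := h.map_add x y
      _ = φ 0 + φ 0 + (ℓ x + ℓ y) := by rw [hℓ x, hℓ y]; ring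
  · apply add_left_cancel (a := φ 0 + t * φ 0)
    calc φ 0 + t * φ 0 + ℓ (t • x) = φ (t • x) + t * φ 0 := by rw [hℓ (t • x)]; ring
      _ = t * φ x + φ 0 := h.map_smul t x
      _ = φ 0 + t * φ 0 + t • ℓ x := by rw [hℓ x, smul_eq_mul]; ring

end PreservesConvexPairs

section Coordinates

variable {R ι : Type*} [CommSemiring R]

theorem preservesConvexPairs_of_forall_sum_eq_one {φ : (ι → R) → R}
    (hφ : ∀ (j : ℕ) (a : Fin j → R), (∑ k, a k) = 1 → ∀ x : Fin j → (ι → R),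
      φ (fun i => ∑ k, a k * x k i) = ∑ k, a k * φ (x k)) :
    PreservesConvexPairs φ := by
  intro a b hab x y
  have := hφ 2 ![a, b] (by simpa [Fin.sum_univ_two] using hab) ![x, y]
  simp only [Fin.sum_univ_two, Matrix.cons_val_zero, Matrix.cons_val_one] at this
  exact this

theorem affine_sum_mul_of_sum_eq_one [Fintype ι] {j : ℕ} (u₀ : R) (u : ι → R) (a : Fin j → R)
    (ha : ∑ k, a k = 1) (x : Fin j → ι → R) :
    u₀ + ∑ i, u i * ∑ k, a k * x k i = ∑ k, a k * (u₀ + ∑ i, u i * x k i) := by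
  simp only [mul_add, sum_add_distrib, ← sum_mul, ha, one_mul, mul_sum]
  rw [sum_comm]
  congr 1
  exact sum_congr rfl fun i _ => sum_congr rfl fun k _ => by ring

theorem eq_of_add_sum_mul_eq [Fintype ι] [IsLeftCancelAdd R] {u₀ u₀' : R} {u u' : ι → R}
    (h : ∀ x : ι → R, u₀ + ∑ i, u i * x i = u₀' + ∑ i, u' i * x i) : u₀ = u₀' ∧ u = u' := by
  classical
  have h₀ : u₀ = u₀' := by simpa using h 0
  refine ⟨h₀, funext fun i => add_left_cancel (a := u₀) ?_⟩
  simpa [Pi.single_apply, h₀] using h (Pi.single i 1)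

end Coordinates

/-- For an Archimedean linearly ordered field `K` with nonnegative cone
`K₊ = {c : K // 0 ≤ c}`, a function `φ : K₊^n → K₊` preserves `K₊`-convex combinations
iff it is of the form `x ↦ u₀ + ∑ i, u i * x i` for a (unique) pair `(u₀, u)` with
entries in `K₊`. -/
theorem stmt2 {K : Type*} [Field K] [LinearOrder K] [IsStrictOrderedRing K] [Archimedean K] (n : ℕ)
    (φ : (Fin n → {c : K // 0 ≤ c}) → {c : K // 0 ≤ c}) :
    ((∀ (j : ℕ) (a : Fin j → {c : K // 0 ≤ c}), (∑ k, a k) = 1 →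
        ∀ x : Fin j → (Fin n → {c : K // 0 ≤ c}),
          φ (fun i => ∑ k, a k * x k i) = ∑ k, a k * φ (x k)) ↔
      ∃ (u₀ : {c : K // 0 ≤ c}) (u : Fin n → {c : K // 0 ≤ c}),
        ∀ x, φ x = u₀ + ∑ i, u i * x i) ∧
    (∀ (u₀ : {c : K // 0 ≤ c}) (u : Fin n → {c : K // 0 ≤ c})
        (u₀' : {c : K // 0 ≤ c}) (u' : Fin n → {c : K // 0 ≤ c}),
      (∀ x, φ x = u₀ + ∑ i, u i * x i) →
      (∀ x, φ x = u₀' + ∑ i, u' i * x i) →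
      u₀ = u₀' ∧ u = u') := by
  classical
  refine ⟨⟨fun hφ => ?_, ?_⟩, fun u₀ u u₀' u' h h' =>
    eq_of_add_sum_mul_eq fun x => (h x).symm.trans (h' x)⟩
  · obtain ⟨ℓ, hℓ⟩ := (preservesConvexPairs_of_forall_sum_eq_one hφ).exists_linearMap
    refine ⟨φ 0, fun i => ℓ fun j => if i = j then 1 else 0, fun x => ?_⟩
    simp_rw [hℓ x, ℓ.pi_apply_eq_sum_univ x, smul_eq_mul, mul_comm]
  · rintro ⟨u₀, u, hu⟩ j a ha x
    simp only [hu]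
    exact affine_sum_mul_of_sum_eq_one u₀ u a ha x
end

section
/- Let n m : ℕ. For every bounded lattice homomorphism H : (Fin n → Prop) → (Fin m → Prop), where both function types carry the pointwise Boolean algebra structure, there exists a unique function k : Fin m → Fin n such that H p = p ∘ k for all p : Fin n → Prop. -/
/-!
Composing `H` with evaluation at `j` gives a bounded lattice homomorphism `φ : 2^n → Prop`.
Every `p` is the finite join of the singletons below it, so `φ p ↔ ∃ i, p i ∧ φ {i}`. Since
`φ ⊤` holds, some singleton `{i}` is sent to `True`, and as distinct singletons meet in `⊥`
this `i` is unique; hence `φ` is evaluation at `i`, and `k j := i`.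
-/

def Pi.evalBoundedLatticeHom {ι : Type*} {α : ι → Type*} [∀ i, Lattice (α i)]
    [∀ i, BoundedOrder (α i)] (i : ι) : BoundedLatticeHom (∀ i, α i) (α i) where
  toLatticeHom := Pi.evalLatticeHom i
  map_top' := rfl
  map_bot' := rfl

namespace BoundedLatticeHom

variable {α : Type*} (φ : BoundedLatticeHom (α → Prop) Prop)

theorem apply_iff_exists_apply_eq [Finite α] (p : α → Prop) :
    φ p ↔ ∃ i, p i ∧ φ (· = i) := by
  classical
  have := Fintype.ofFinite α
  have hp : p = {i | p i}.toFinset.sup fun i ↦ (· = i) := by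
    ext x; simp [Finset.sup_eq_iSup]
  conv_lhs => rw [hp, map_finset_sup]
  simp [Finset.sup_eq_iSup]

theorem eq_of_apply_eq {i i' : α} (hi : φ (· = i)) (hi' : φ (· = i')) : i = i' := by
  by_contra hne
  have hdisj : ((· = i) ⊓ (· = i') : α → Prop) = ⊥ := by
    ext x
    simp only [Pi.inf_apply, Pi.bot_apply, inf_Prop_eq, Prop.bot_eq_false, iff_false, not_and]
    rintro rfl
    exact hne
  have : φ ((· = i) ⊓ (· = i')) := by rw [map_inf]; exact ⟨hi, hi'⟩
  rwa [hdisj, map_bot] at this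

theorem existsUnique_forall_apply_iff [Finite α] : ∃! i, ∀ p, φ p ↔ p i := by
  obtain ⟨i, -, hi⟩ := (φ.apply_iff_exists_apply_eq ⊤).1 (by rw [map_top]; trivial)
  refine ⟨i, fun p ↦ ?_, fun i' hi' ↦ (φ.eq_of_apply_eq hi ((hi' _).2 rfl)).symm⟩
  rw [φ.apply_iff_exists_apply_eq]
  exact ⟨fun ⟨i', hpi', hi'⟩ ↦ φ.eq_of_apply_eq hi hi' ▸ hpi',
    fun hpi ↦ ⟨i, hpi, hi⟩⟩

end BoundedLatticeHom

/-- Every bounded lattice homomorphism `(Fin n → Prop) → (Fin m → Prop)` between the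
pointwise Boolean algebras `2^n` and `2^m` is induced by precomposition with a unique
function `k : Fin m → Fin n`. -/
theorem stmt8 (n m : ℕ) (H : BoundedLatticeHom (Fin n → Prop) (Fin m → Prop)) :
    ∃! k : Fin m → Fin n, ∀ p : Fin n → Prop, H p = p ∘ k := by
  choose k hk huniq using fun j ↦
    ((Pi.evalBoundedLatticeHom j).comp H).existsUnique_forall_apply_iff
  refine ⟨k, fun p ↦ funext fun j ↦ propext (hk j p), fun k' hk' ↦ funext fun j ↦ ?_⟩
  exact huniq j _ fun p ↦ iff_of_eq (congrFun (hk' p) j)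
end

section
/- Let A and C be categories, let G : A ⥤ C be a monadic right adjoint functor, suppose A has binary coproducts, and let E be an object of A. Then the composite functor (Under.forget E) ⋙ G : Under E ⥤ C is a monadic right adjoint. -/
/-!
By Beck's theorem it suffices that `Under.forget E ⋙ G` creates coequalizers of the pairs it sends
to split pairs. `Under.forget E` creates all connected colimits, in particular coequalizers, and the
monadic functor `G` creates coequalizers of `G`-split pairs, so the composite creates them.

For Beck's theorem itself: every object `Y` is the coequalizer of its counit pair
`F G F G Y ⇉ F G Y`, because `G` reflects that coequalizer (it is sent to a split coequalizer);
this makes the comparison functor fully faithful. For an algebra `X`, lifting the split coequalizer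
`T T X ⇉ T X → X` along `G` gives an object whose comparison algebra is `X`, so the comparison
functor is essentially surjective.
-/

open CategoryTheory CategoryTheory.Limits

namespace CategoryTheory.Monad

noncomputable section

section

variable {C D : Type*} [Category C] [Category D] {G : D ⥤ C} {F : C ⥤ D} (adj : F ⊣ G)

theorem isSplitPair_map_a_counit_app (X : adj.toMonad.Algebra) :
    G.IsSplitPair (F.map X.a) (adj.counit.app (F.obj X.A)) :=
  ⟨_, _, ⟨beckSplitCoequalizer X⟩⟩

abbrev counitCofork (Y : D) :
    Cofork (F.map (G.map (adj.counit.app Y))) (adj.counit.app (F.obj (G.obj Y))) :=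
  Cofork.ofπ (adj.counit.app Y) (adj.counit_naturality _)

theorem map_comp_counit_coequalizes {Y Y' : D} (h : G.obj Y ⟶ G.obj Y')
    (w : G.map (F.map h) ≫ G.map (adj.counit.app Y') = G.map (adj.counit.app Y) ≫ h) :
    F.map (G.map (adj.counit.app Y)) ≫ F.map h ≫ adj.counit.app Y' =
      adj.counit.app (F.obj (G.obj Y)) ≫ F.map h ≫ adj.counit.app Y' := by
  rw [← F.map_comp_assoc, ← w]
  simp

-- The algebra `(A, a)` is unbundled so that `a : G (F A) ⟶ A` rather than `T A ⟶ A`, which keeps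
-- the rewrites below well-typed.
theorem map_map_hom_comp_eq_of_map_comp_eq {A : C} {a : G.obj (F.obj A) ⟶ A}
    (unit : adj.unit.app A ≫ a = 𝟙 A)
    (assoc : G.map (F.map a) ≫ a = G.map (adj.counit.app (F.obj A)) ≫ a)
    {Y : D} (π : F.obj A ⟶ Y) (φ : G.obj Y ≅ A) (h : G.map π ≫ φ.hom = a) :
    G.map (F.map φ.hom) ≫ a = G.map (adj.counit.app Y) ≫ φ.hom := by
  have hπ : G.map π = a ≫ φ.inv := (Iso.eq_comp_inv φ).mpr h
  have : IsSplitEpi (G.map π) := ⟨⟨φ.hom ≫ adj.unit.app A, by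
    rw [hπ, Category.assoc, reassoc_of% unit, φ.hom_inv_id]⟩⟩
  rw [← cancel_epi (G.map (F.map (G.map π)))]
  calc G.map (F.map (G.map π)) ≫ G.map (F.map φ.hom) ≫ a
      = G.map (F.map a) ≫ a := by rw [← G.map_comp_assoc, ← F.map_comp, h]
    _ = G.map (adj.counit.app (F.obj A)) ≫ a := assoc
    _ = G.map (F.map (G.map π)) ≫ G.map (adj.counit.app Y) ≫ φ.hom := by
      rw [← G.map_comp_assoc, adj.counit_naturality π, G.map_comp_assoc, h]

def comparisonObjIsoOfMapComp {X : adj.toMonad.Algebra} {Y : D} (π : F.obj X.A ⟶ Y)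
    (φ : G.obj Y ≅ X.A) (h : G.map π ≫ φ.hom = X.a) : (comparison adj).obj Y ≅ X :=
  Algebra.isoMk φ (map_map_hom_comp_eq_of_map_comp_eq adj X.unit X.assoc.symm π φ h)

variable [∀ X : adj.toMonad.Algebra,
  CreatesColimit (parallelPair (F.map X.a) (adj.counit.app (F.obj X.A))) G]

def isColimitCounitCofork (Y : D) : IsColimit (counitCofork adj Y) :=
  have : ReflectsColimit (parallelPair (F.map (G.map (adj.counit.app Y)))
      (adj.counit.app (F.obj (G.obj Y)))) G :=
    (‹∀ X : adj.toMonad.Algebra, CreatesColimit (parallelPair (F.map X.a)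
      (adj.counit.app (F.obj X.A))) G› ((comparison adj).obj Y)).toReflectsColimit
  isColimitOfIsColimitCoforkMap G _ (beckCoequalizer ((comparison adj).obj Y))

theorem map_desc_counitCofork {Y Y' : D} (h : G.obj Y ⟶ G.obj Y')
    (w : F.map (G.map (adj.counit.app Y)) ≫ F.map h ≫ adj.counit.app Y' =
      adj.counit.app (F.obj (G.obj Y)) ≫ F.map h ≫ adj.counit.app Y') :
    G.map (Cofork.IsColimit.desc (isColimitCounitCofork adj Y)
      (F.map h ≫ adj.counit.app Y') w : Y ⟶ Y') = h := by
  set d : Y ⟶ Y' := Cofork.IsColimit.desc (isColimitCounitCofork adj Y) _ w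
  have hd : adj.counit.app Y ≫ d = F.map h ≫ adj.counit.app Y' :=
    Cofork.IsColimit.π_desc' (isColimitCounitCofork adj Y) _ w
  calc G.map d = adj.unit.app (G.obj Y) ≫ G.map (adj.counit.app Y ≫ d) := by simp
    _ = h := by rw [hd]; simp

def comparisonFullyFaithful : (comparison adj).FullyFaithful where
  preimage {Y Y'} h := Cofork.IsColimit.desc (isColimitCounitCofork adj Y)
    (F.map h.f ≫ adj.counit.app Y') (map_comp_counit_coequalizes adj h.f h.h)
  map_preimage h := Algebra.Hom.ext (map_desc_counitCofork adj h.f _)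
  preimage_map {Y Y'} f := Cofork.IsColimit.hom_ext (isColimitCounitCofork adj Y) <| by
    exact (Cofork.IsColimit.π_desc' _ _ _).trans (adj.counit_naturality f)

theorem comparison_essSurj : (comparison adj).EssSurj where
  mem_essImage X := by
    let K := parallelPair (F.map X.a) (adj.counit.app (F.obj X.A))
    let t := (IsColimit.precomposeHomEquiv (diagramIsoParallelPair (K ⋙ G)) _).symm
      (beckCoequalizer X)
    let φ := (Cocone.forget _).mapIso (liftedColimitMapsToOriginal t)
    have h : G.map ((liftColimit t).ι.app .one) ≫ φ.hom = 𝟙 (G.obj (K.obj .one)) ≫ X.a :=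
      ((liftedColimitMapsToOriginal t).hom.w .one).trans (by
        simp [diagramIsoParallelPair, beckCofork, IsSplitCoequalizer.asCofork, Cocone.precompose])
    exact ⟨(liftColimit t).pt,
      ⟨comparisonObjIsoOfMapComp adj _ φ (h.trans (Category.id_comp _))⟩⟩

-- Beck's theorem, without Mathlib's assumption that `C` and `D` share a morphism universe.
@[reducible]
def monadicOfCreatesCanonicalCoequalizers : MonadicRightAdjoint G where
  L := F
  adj := adj
  eqv :=
    { faithful := (comparisonFullyFaithful adj).faithful
      full := (comparisonFullyFaithful adj).full
      essSurj := comparison_essSurj adj }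

end

section Composite

variable {A B C : Type*} [Category A] [Category B] [Category C]

theorem preservesColimit_of_hasSplitCoequalizer {K : WalkingParallelPair ⥤ C}
    [HasSplitCoequalizer (K.map .left) (K.map .right)] (H : C ⥤ B) : PreservesColimit K H :=
  preservesColimit_of_iso_diagram H (diagramIsoParallelPair K).symm

@[reducible]
def createsColimitOfIsSplitPair (G : A ⥤ C) [MonadicRightAdjoint G] {X Y : A} (f g : X ⟶ Y)
    [G.IsSplitPair f g] : CreatesColimit (parallelPair f g) G :=
  have : HasSplitCoequalizer ((parallelPair f g ⋙ G).map .left)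
      ((parallelPair f g ⋙ G).map .right) := ‹G.IsSplitPair f g›
  have : HasSplitCoequalizer (((parallelPair f g ⋙ G) ⋙ monadicLeftAdjoint G ⋙ G).map .left)
      (((parallelPair f g ⋙ G) ⋙ monadicLeftAdjoint G ⋙ G).map .right) :=
    map_is_split_pair (monadicLeftAdjoint G ⋙ G) (G.map f) (G.map g)
  have := preservesColimit_of_hasSplitCoequalizer (K := parallelPair f g ⋙ G)
    (monadicLeftAdjoint G ⋙ G)
  have := preservesColimit_of_hasSplitCoequalizer
    (K := (parallelPair f g ⋙ G) ⋙ monadicLeftAdjoint G ⋙ G) (monadicLeftAdjoint G ⋙ G)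
  monadicCreatesColimitOfPreservesColimit G _

@[reducible]
def createsColimitOfIsSplitPairComp (U : B ⥤ A) (G : A ⥤ C)
    [CreatesColimitsOfShape WalkingParallelPair U] [MonadicRightAdjoint G] {X Y : B}
    (f g : X ⟶ Y) [(U ⋙ G).IsSplitPair f g] : CreatesColimit (parallelPair f g) (U ⋙ G) :=
  have : G.IsSplitPair (U.map f) (U.map g) := ‹(U ⋙ G).IsSplitPair f g›
  have : CreatesColimit (parallelPair ((parallelPair f g ⋙ U).map .left)
      ((parallelPair f g ⋙ U).map .right)) G :=
    createsColimitOfIsSplitPair G (U.map f) (U.map g)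
  have : CreatesColimit (parallelPair f g ⋙ U) G :=
    createsColimitOfIsoDiagram G (diagramIsoParallelPair _).symm
  compCreatesColimit U G

@[reducible]
def monadicRightAdjointComp (U : B ⥤ A) (G : A ⥤ C) [U.IsRightAdjoint]
    [CreatesColimitsOfShape WalkingParallelPair U] [MonadicRightAdjoint G] :
    MonadicRightAdjoint (U ⋙ G) :=
  let adj := (monadicAdjunction G).comp (Adjunction.ofIsRightAdjoint U)
  have (X : adj.toMonad.Algebra) :=
    have := isSplitPair_map_a_counit_app adj X
    createsColimitOfIsSplitPairComp U G ((monadicLeftAdjoint G ⋙ U.leftAdjoint).map X.a)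
      (adj.counit.app _)
  monadicOfCreatesCanonicalCoequalizers adj

end Composite

end

end CategoryTheory.Monad

/-- If `G : A ⥤ C` is a monadic right adjoint and `A` has binary coproducts, then for
any object `E` of `A` the composite `Under.forget E ⋙ G : Under E ⥤ C` is a monadic
right adjoint. -/
theorem stmt9 {A : Type*} {C : Type*} [Category A] [Category C]
    (G : A ⥤ C) [MonadicRightAdjoint G] [HasBinaryCoproducts A] (E : A) :
    Nonempty (MonadicRightAdjoint (Under.forget E ⋙ G)) :=
  ⟨Monad.monadicRightAdjointComp (Under.forget E) G⟩
end
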